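/- arXiv:2102.04068 — 3 statements merged into one kernel-verified Lean document; each statement's English description precedes it below -/
import Mathlib

section
/- Let (𝒯, d) be an ℝ-tree and 𝒮 ⊆ 𝒯 a dense subtree (i.e., a dense subset that is itself an ℝ-tree with the induced metric, closed under taking segments). Then every point of 𝒯 \ 𝒮 is an endpoint of 𝒯, i.e., has degree 1 (removing it leaves 𝒯 connected). -/
open Set

/-- `f` parametrizes the geodesic segment from `x` to `y` by arclength on `[0, d(x,y)]`. -/
def IsSegParam {T : Type*} [MetricSpace T] (x y : T) (f : ℝ → T) : Prop :=
  f 0 = x ∧ f (dist x y) = y ∧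
    ∀ s ∈ Set.Icc (0 : ℝ) (dist x y), ∀ t ∈ Set.Icc (0 : ℝ) (dist x y),
      dist (f s) (f t) = |s - t|

/-- The segment joining `x` and `y`: the union of images of arclength parametrizations. -/
def seg {T : Type*} [MetricSpace T] (x y : T) : Set T :=
  {p | ∃ f : ℝ → T, IsSegParam x y f ∧ ∃ t ∈ Set.Icc (0 : ℝ) (dist x y), f t = p}

/-- A metric space is an ℝ-tree: any two points are joined by a unique arclength
parametrized segment, and every injective continuous path between two points has
image equal to that segment. -/
structure IsRTree (T : Type*) [MetricSpace T] : Prop where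
  exists_param : ∀ x y : T, ∃ f : ℝ → T, IsSegParam x y f
  unique_param : ∀ x y : T, ∀ f g : ℝ → T, IsSegParam x y f → IsSegParam x y g →
    Set.EqOn f g (Set.Icc (0 : ℝ) (dist x y))
  inj_path : ∀ x y : T, ∀ q : ℝ → T, Continuous q → Set.InjOn q (Set.Icc (0 : ℝ) 1) →
    q 0 = x → q 1 = y → q '' Set.Icc (0 : ℝ) 1 = seg x y

/-!
A subtree `S` is connected, since any two of its points are joined by a segment, the continuous
image of an interval, lying in `S`. If `z ∉ S` then `S ⊆ T \ {z} ⊆ closure S = T`, and a set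
squeezed between a connected set and its closure is connected.
-/

section

variable {T : Type*} [MetricSpace T]

lemma IsSegParam.continuousOn {x y : T} {f : ℝ → T} (hf : IsSegParam x y f) :
    ContinuousOn f (Icc 0 (dist x y)) := by
  refine (LipschitzOnWith.of_dist_le_mul (K := 1) fun s hs t ht => ?_).continuousOn
  simp [hf.2.2 s hs t ht, Real.dist_eq]

lemma IsSegParam.image_subset_seg {x y : T} {f : ℝ → T} (hf : IsSegParam x y f) :
    f '' Icc 0 (dist x y) ⊆ seg x y := by
  rintro _ ⟨t, ht, rfl⟩
  exact ⟨f, hf, t, ht, rfl⟩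

lemma IsSegParam.left_mem_image {x y : T} {f : ℝ → T} (hf : IsSegParam x y f) :
    x ∈ f '' Icc 0 (dist x y) :=
  ⟨0, left_mem_Icc.2 dist_nonneg, hf.1⟩

lemma IsSegParam.right_mem_image {x y : T} {f : ℝ → T} (hf : IsSegParam x y f) :
    y ∈ f '' Icc 0 (dist x y) :=
  ⟨dist x y, right_mem_Icc.2 dist_nonneg, hf.2.1⟩

lemma IsRTree.isPreconnected_of_seg_subset (h : IsRTree T) {S : Set T}
    (hsub : ∀ x ∈ S, ∀ y ∈ S, seg x y ⊆ S) : IsPreconnected S := by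
  refine isPreconnected_of_forall_pair fun x hx y hy => ?_
  obtain ⟨f, hf⟩ := h.exists_param x y
  exact ⟨f '' Icc 0 (dist x y), hf.image_subset_seg.trans (hsub x hx y hy),
    hf.left_mem_image, hf.right_mem_image, isPreconnected_Icc.image f hf.continuousOn⟩

end

/-- If `S` is a dense subtree of an ℝ-tree `T`, then every point of `T \ S` is an
endpoint of `T`: removing it leaves the space connected. -/
theorem dense_subtree_complement_endpoints {T : Type*} [MetricSpace T]
    (h : IsRTree T) (S : Set T) (hdense : Dense S)
    (hsub : ∀ x ∈ S, ∀ y ∈ S, seg x y ⊆ S) :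
    ∀ z : T, z ∉ S → IsConnected ({z}ᶜ : Set T) := by
  intro z hz
  have : Nonempty T := ⟨z⟩
  have hS : IsConnected S := ⟨hdense.nonempty, h.isPreconnected_of_seg_subset hsub⟩
  refine hS.subset_closure (fun s hs => ?_) (fun _ _ => hdense.closure_eq ▸ mem_univ _)
  exact mem_compl_singleton_iff.2 fun hsz => hz (hsz ▸ hs)
end

section
/- Let W be a countable family of continuous functions π : (−∞, σ_π] → ℝ (each with starting time σ_π ∈ ℝ) that is coalescing: for any π, π' ∈ W, if π(s) = π'(s) for some s ≤ σ_π ∧ σ_{π'} then π(r) = π'(r) for all r ≤ s. For (t, π), (s, π') with t ≤ σ_π, s ≤ σ_{π'}, assume the coalescence time τ(π,π') := sup{r ≤ σ_π ∧ σ_{π'} : π(r) = π'(r)} is finite for every pair. Then d((t,π), (s,π')) := (t + s) − 2(τ(π,π') ∧ t ∧ s) defines a pseudometric on the set {(t,π) : π ∈ W, t ≤ σ_π}; in particular it satisfies the triangle inequality. -/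
/-!
Write `τ i j` for the coalescence time of the paths `i` and `j`. Since paths that meet stay
together backwards in time, the set of times at which `i` and `j` agree is the half-line
`(−∞, τ i j]`, so `τ` is symmetric, `τ i i = σ i`, and `min (τ i j) (τ j k) ≤ τ i k`.
The ancestral distance is then the tree metric of the genealogy: going from `(i, t)` to
`(k, u)` via `(j, s)` passes through `s` and through the common ancestor at time
`min (τ i k) t u`, and the triangle inequality is the identity `x + y = min x y + max x y`
applied to the two meeting times of the detour.
-/

open Set

variable {ι : Type*}

/-- The set of points of the forest associated to a family of backward paths
`π i : (−∞, σ i] → ℝ`: pairs `(i, t)` with `t ≤ σ i`. -/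
def CoalPoints (σ : ι → ℝ) : Type _ := {p : ι × ℝ // p.2 ≤ σ p.1}

/-- The ancestral distance between `(i,t)` and `(j,s)`:
`(t + s) − 2 (τ i j ⊓ t ⊓ s)`. -/
noncomputable def ancestralDist (σ : ι → ℝ) (τ : ι → ι → ℝ)
    (p q : CoalPoints σ) : ℝ :=
  p.1.2 + q.1.2 - 2 * min (τ p.1.1 q.1.1) (min p.1.2 q.1.2)

def coalSet (σ : ι → ℝ) (π : ι → ℝ → ℝ) (i j : ι) : Set ℝ :=
  {r | r ≤ min (σ i) (σ j) ∧ π i r = π j r}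

section CoalescenceTime

variable {σ : ι → ℝ} {π : ι → ℝ → ℝ} {τ : ι → ι → ℝ}

theorem coalSet_comm (i j : ι) : coalSet σ π i j = coalSet σ π j i := by
  ext r
  simp only [coalSet, mem_ofPred_eq, min_comm (σ i), eq_comm]

theorem coalSet_self (i : ι) : coalSet σ π i i = Iic (σ i) := by
  ext r
  simp [coalSet]

theorem coalTime_comm (hτ : ∀ i j, IsGreatest (coalSet σ π i j) (τ i j)) (i j : ι) :
    τ i j = τ j i :=
  (hτ i j).unique (coalSet_comm i j ▸ hτ j i)

theorem coalTime_self (hτ : ∀ i j, IsGreatest (coalSet σ π i j) (τ i j)) (i : ι) :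
    τ i i = σ i :=
  (hτ i i).unique (coalSet_self i ▸ isGreatest_Iic)

theorem mem_coalSet_of_le_coalTime
    (hcoal : ∀ i j : ι, ∀ s ≤ min (σ i) (σ j), π i s = π j s → ∀ r ≤ s, π i r = π j r)
    {i j : ι} {x r : ℝ} (hx : IsGreatest (coalSet σ π i j) x) (hr : r ≤ x) :
    r ∈ coalSet σ π i j :=
  ⟨hr.trans hx.1.1, hcoal i j x hx.1.1 hx.1.2 r hr⟩

theorem min_coalTime_le
    (hcoal : ∀ i j : ι, ∀ s ≤ min (σ i) (σ j), π i s = π j s → ∀ r ≤ s, π i r = π j r)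
    (hτ : ∀ i j, IsGreatest (coalSet σ π i j) (τ i j)) (i j k : ι) :
    min (τ i j) (τ j k) ≤ τ i k := by
  obtain ⟨hij_le, hij⟩ := mem_coalSet_of_le_coalTime hcoal (hτ i j) (min_le_left _ _)
  obtain ⟨hjk_le, hjk⟩ := mem_coalSet_of_le_coalTime hcoal (hτ j k) (min_le_right _ _)
  exact (hτ i k).2
    ⟨le_min (hij_le.trans (min_le_left _ _)) (hjk_le.trans (min_le_right _ _)), hij.trans hjk⟩

end CoalescenceTime

theorem min_add_min_le_add_min {a b c t s u : ℝ} (habc : min a b ≤ c) :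
    min a (min t s) + min b (min s u) ≤ s + min c (min t u) := by
  set x := min a (min t s)
  set y := min b (min s u)
  have hmin : min x y ≤ min c (min t u) := by
    refine le_min ((min_le_min (min_le_left _ _) (min_le_left _ _)).trans habc) (le_min ?_ ?_)
    · exact (min_le_left _ _).trans ((min_le_right _ _).trans (min_le_left _ _))
    · exact (min_le_right _ _).trans ((min_le_right _ _).trans (min_le_right _ _))
  have hmax : max x y ≤ s :=
    max_le ((min_le_right _ _).trans (min_le_right _ _))
      ((min_le_right _ _).trans (min_le_left _ _))
  calc x + y = min x y + max x y := (min_add_max x y).symm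
    _ ≤ s + min c (min t u) := by linarith

section AncestralDist

variable {σ : ι → ℝ} {τ : ι → ι → ℝ}

theorem ancestralDist_nonneg (p q : CoalPoints σ) : 0 ≤ ancestralDist σ τ p q := by
  have := min_le_right (τ p.1.1 q.1.1) (min p.1.2 q.1.2)
  have := min_le_left p.1.2 q.1.2
  have := min_le_right p.1.2 q.1.2
  unfold ancestralDist
  linarith

theorem ancestralDist_self (hτ : ∀ i, σ i ≤ τ i i) (p : CoalPoints σ) :
    ancestralDist σ τ p p = 0 := by
  rw [ancestralDist, min_self, min_eq_right (p.2.trans (hτ _))]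
  ring

theorem ancestralDist_comm (hτ : ∀ i j, τ i j = τ j i) (p q : CoalPoints σ) :
    ancestralDist σ τ p q = ancestralDist σ τ q p := by
  rw [ancestralDist, ancestralDist, hτ, min_comm p.1.2, add_comm p.1.2]

theorem ancestralDist_triangle (hτ : ∀ i j k, min (τ i j) (τ j k) ≤ τ i k)
    (p q r : CoalPoints σ) :
    ancestralDist σ τ p r ≤ ancestralDist σ τ p q + ancestralDist σ τ q r := by
  have := min_add_min_le_add_min (t := p.1.2) (s := q.1.2) (u := r.1.2) (hτ p.1.1 q.1.1 r.1.1)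
  unfold ancestralDist
  linarith

end AncestralDist

theorem ancestralDist_pseudometric_general {ι : Type*}
    (σ : ι → ℝ) (π : ι → ℝ → ℝ) (τ : ι → ι → ℝ)
    (hcoal : ∀ i j : ι, ∀ s ≤ min (σ i) (σ j), π i s = π j s →
      ∀ r ≤ s, π i r = π j r)
    (hτ : ∀ i j : ι, IsGreatest {r : ℝ | r ≤ min (σ i) (σ j) ∧ π i r = π j r} (τ i j)) :
    (∀ p q : CoalPoints σ, 0 ≤ ancestralDist σ τ p q) ∧
    (∀ p : CoalPoints σ, ancestralDist σ τ p p = 0) ∧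
    (∀ p q : CoalPoints σ, ancestralDist σ τ p q = ancestralDist σ τ q p) ∧
    (∀ p q r : CoalPoints σ,
      ancestralDist σ τ p r ≤ ancestralDist σ τ p q + ancestralDist σ τ q r) :=
  ⟨ancestralDist_nonneg,
    ancestralDist_self fun i => (coalTime_self hτ i).ge,
    ancestralDist_comm (coalTime_comm hτ),
    ancestralDist_triangle (min_coalTime_le hcoal hτ)⟩

/-- For a countable coalescing family of continuous backward paths with finite pairwise
coalescence times, the ancestral distance is a pseudometric: it is non-negative,
vanishes on the diagonal, is symmetric and satisfies the triangle inequality. -/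
theorem ancestralDist_pseudometric {ι : Type*} [Countable ι]
    (σ : ι → ℝ) (π : ι → ℝ → ℝ) (τ : ι → ι → ℝ)
    (hcont : ∀ i, ContinuousOn (π i) (Set.Iic (σ i)))
    (hcoal : ∀ i j : ι, ∀ s ≤ min (σ i) (σ j), π i s = π j s →
      ∀ r ≤ s, π i r = π j r)
    (hτ : ∀ i j : ι, IsGreatest {r : ℝ | r ≤ min (σ i) (σ j) ∧ π i r = π j r} (τ i j)) :
    (∀ p q : CoalPoints σ, 0 ≤ ancestralDist σ τ p q) ∧
    (∀ p : CoalPoints σ, ancestralDist σ τ p p = 0) ∧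
    (∀ p q : CoalPoints σ, ancestralDist σ τ p q = ancestralDist σ τ q p) ∧
    (∀ p q r : CoalPoints σ,
      ancestralDist σ τ p r ≤ ancestralDist σ τ p q + ancestralDist σ τ q r) :=
  ancestralDist_pseudometric_general σ π τ hcoal hτ
end

section
/- In the setting of a coalescing family of paths with the ancestral distance d((t,π),(s,π')) = (t+s) − 2τ_{t,s}, the distance is an ℝ-tree pseudometric, i.e., it satisfies the four-point condition: for all points 𝔷₁, 𝔷₂, 𝔷₃, 𝔷₄, one has d(𝔷₁,𝔷₂) + d(𝔷₃,𝔷₄) ≤ max( d(𝔷₁,𝔷₃) + d(𝔷₂,𝔷₄), d(𝔷₁,𝔷₄) + d(𝔷₂,𝔷₃) ). -/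
/-!
Write `d(p, q) = t_p + t_q - 2 m(p, q)` with the meet height `m(p, q) = τ ⊓ t_p ⊓ t_q`.
Paths that have met stay together in the past, so `τ`, and hence `m`, satisfies the ultrametric
inequality `min (m p r) (m r q) ≤ m p q`. The four-point condition for `d` is the inequality
`min (m₁₃ + m₂₄) (m₁₄ + m₂₃) ≤ m₁₂ + m₃₄`, which follows from four instances of the ultrametric
inequality: in each case one of the two sums on the left is bounded by `m₁₂ + m₃₄` termwise or
their average is.
-/

open Set

variable {ι : Type*}

theorem min_add_le_add_of_min_le {a b c d e f : ℝ} (h₁ : min b d ≤ a) (h₂ : min c e ≤ a)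
    (h₃ : min b c ≤ f) (h₄ : min d e ≤ f) : min (b + e) (c + d) ≤ a + f := by
  have hbe := min_le_left (b + e) (c + d)
  have hcd := min_le_right (b + e) (c + d)
  rw [min_le_iff] at h₁ h₂ h₃ h₄
  rcases h₁ with h₁ | h₁ <;> rcases h₂ with h₂ | h₂ <;> rcases h₃ with h₃ | h₃ <;>
    rcases h₄ with h₄ | h₄ <;> linarith

theorem min_add_le_add_of_ultrametric {X : Type*} {m : X → X → ℝ}
    (hcomm : ∀ p q, m p q = m q p) (hultra : ∀ p q r, min (m p r) (m r q) ≤ m p q)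
    (p₁ p₂ p₃ p₄ : X) :
    min (m p₁ p₃ + m p₂ p₄) (m p₁ p₄ + m p₂ p₃) ≤ m p₁ p₂ + m p₃ p₄ := by
  refine min_add_le_add_of_min_le ?_ ?_ ?_ ?_
  · simpa only [hcomm p₃ p₂] using hultra p₁ p₂ p₃
  · simpa only [hcomm p₄ p₂] using hultra p₁ p₂ p₄
  · simpa only [hcomm p₃ p₁] using hultra p₃ p₄ p₁
  · simpa only [hcomm p₃ p₂] using hultra p₃ p₄ p₂

section Coalescence

variable {σ : ι → ℝ} {π : ι → ℝ → ℝ} {τ : ι → ι → ℝ}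

theorem coalescenceTime_comm
    (hτ : ∀ i j, IsGreatest {r : ℝ | r ≤ min (σ i) (σ j) ∧ π i r = π j r} (τ i j)) (i j : ι) :
    τ i j = τ j i :=
  (hτ i j).unique (by simpa only [min_comm, eq_comm] using hτ j i)

theorem min_coalescenceTime_le
    (hcoal : ∀ i j : ι, ∀ s ≤ min (σ i) (σ j), π i s = π j s → ∀ r ≤ s, π i r = π j r)
    (hτ : ∀ i j, IsGreatest {r : ℝ | r ≤ min (σ i) (σ j) ∧ π i r = π j r} (τ i j)) (i j k : ι) :
    min (τ i j) (τ j k) ≤ τ i k := by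
  obtain ⟨⟨hij_le, hij_eq⟩, -⟩ := hτ i j
  obtain ⟨⟨hjk_le, hjk_eq⟩, -⟩ := hτ j k
  have hπij := hcoal i j _ hij_le hij_eq _ (min_le_left (τ i j) (τ j k))
  have hπjk := hcoal j k _ hjk_le hjk_eq _ (min_le_right (τ i j) (τ j k))
  refine (hτ i k).2 ⟨le_min ?_ ?_, hπij.trans hπjk⟩
  · exact (min_le_left _ _).trans (hij_le.trans (min_le_left _ _))
  · exact (min_le_right _ _).trans (hjk_le.trans (min_le_right _ _))

variable (σ τ) in
def meetHeight (p q : CoalPoints σ) : ℝ :=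
  min (τ p.1.1 q.1.1) (min p.1.2 q.1.2)

theorem ancestralDist_eq_sub_meetHeight (p q : CoalPoints σ) :
    ancestralDist σ τ p q = p.1.2 + q.1.2 - 2 * meetHeight σ τ p q :=
  rfl

theorem meetHeight_comm (hτ : ∀ i j, τ i j = τ j i) (p q : CoalPoints σ) :
    meetHeight σ τ p q = meetHeight σ τ q p := by
  simp only [meetHeight, hτ p.1.1, min_comm p.1.2]

theorem min_meetHeight_le (hτ : ∀ i j k, min (τ i j) (τ j k) ≤ τ i k)
    (p q r : CoalPoints σ) :
    min (meetHeight σ τ p r) (meetHeight σ τ r q) ≤ meetHeight σ τ p q := by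
  refine le_min ?_ (le_min ?_ ?_)
  · exact (min_le_min (min_le_left _ _) (min_le_left _ _)).trans (hτ p.1.1 r.1.1 q.1.1)
  · exact (min_le_left _ _).trans ((min_le_right _ _).trans (min_le_left _ _))
  · exact (min_le_right _ _).trans ((min_le_right _ _).trans (min_le_right _ _))

end Coalescence

theorem ancestralDist_fourPoint_general {ι : Type*}
    (σ : ι → ℝ) (π : ι → ℝ → ℝ) (τ : ι → ι → ℝ)
    (hcoal : ∀ i j : ι, ∀ s ≤ min (σ i) (σ j), π i s = π j s →
      ∀ r ≤ s, π i r = π j r)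
    (hτ : ∀ i j : ι, IsGreatest {r : ℝ | r ≤ min (σ i) (σ j) ∧ π i r = π j r} (τ i j)) :
    ∀ p₁ p₂ p₃ p₄ : CoalPoints σ,
      ancestralDist σ τ p₁ p₂ + ancestralDist σ τ p₃ p₄ ≤
        max (ancestralDist σ τ p₁ p₃ + ancestralDist σ τ p₂ p₄)
            (ancestralDist σ τ p₁ p₄ + ancestralDist σ τ p₂ p₃) := by
  intro p₁ p₂ p₃ p₄
  have key := min_add_le_add_of_ultrametric
    (meetHeight_comm (coalescenceTime_comm hτ))
    (min_meetHeight_le (min_coalescenceTime_le hcoal hτ)) p₁ p₂ p₃ p₄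
  simp only [ancestralDist_eq_sub_meetHeight, le_max_iff]
  rcases min_le_iff.1 key with h | h
  · left; linarith
  · right; linarith

/-- The ancestral distance of a coalescing family of backward paths satisfies the
four-point condition (0-hyperbolicity), i.e. it is an ℝ-tree pseudometric. -/
theorem ancestralDist_fourPoint {ι : Type*} [Countable ι]
    (σ : ι → ℝ) (π : ι → ℝ → ℝ) (τ : ι → ι → ℝ)
    (hcont : ∀ i, ContinuousOn (π i) (Set.Iic (σ i)))
    (hcoal : ∀ i j : ι, ∀ s ≤ min (σ i) (σ j), π i s = π j s →
      ∀ r ≤ s, π i r = π j r)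
    (hτ : ∀ i j : ι, IsGreatest {r : ℝ | r ≤ min (σ i) (σ j) ∧ π i r = π j r} (τ i j)) :
    ∀ p₁ p₂ p₃ p₄ : CoalPoints σ,
      ancestralDist σ τ p₁ p₂ + ancestralDist σ τ p₃ p₄ ≤
        max (ancestralDist σ τ p₁ p₃ + ancestralDist σ τ p₂ p₄)
            (ancestralDist σ τ p₁ p₄ + ancestralDist σ τ p₂ p₃) :=
  ancestralDist_fourPoint_general σ π τ hcoal hτ
end
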